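/- Assume ω₀ = −(n−1)/2 and that σ = 0 in case n > 3 (σ ∈ ℝ arbitrary in case n = 3), and set γ̃ = (n−1)/2. Then every brane scale function f satisfies on (−a, 0) the identity f″ + γ̃·f′² = (Λ/n)·e^{2f} − γ̃·κ̃ + (κ²/n²)·( −λ(f)·ρ₀²·e^{−(n−1)f − 2μ̃(f)} + (2 − λ(f))·σ·ρ₀·e^{−μ̃(f)} + (γ̃ + 1)·σ²·e^{2f} ). -/

import Mathlib

/-!
Along a brane scale function the Friedmann equation reads `f'² = F(f)`, so differentiating it
and dividing by `f' ≠ 0` gives `f'' = F'(f) / 2`, and the claim becomes an identity for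
`F'/2 + γ̃ F`. This operator annihilates `m e^{-(n-1)f}`, and for `ω₀ = -(n-1)/2` the matter
term `(σ + ρ₀ e^{-(n+1)f/2 - μ̃(f)})² e^{2f}` collapses to the stated form except for the cross
term, which carries `σ e^{-(n-3)f/2 - μ̃(f)}`: that is `σ e^{-μ̃(f)}` for `n = 3`.
-/

open Real Filter Topology

theorem deriv_deriv_eq_half_deriv_of_sq_deriv_eventuallyEq_comp {f F : ℝ → ℝ} {τ : ℝ}
    (hf : DifferentiableAt ℝ f τ) (hf' : DifferentiableAt ℝ (deriv f) τ)
    (hF : DifferentiableAt ℝ F (f τ)) (hne : deriv f τ ≠ 0)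
    (heq : (fun t => deriv f t ^ 2) =ᶠ[𝓝 τ] F ∘ f) :
    deriv (deriv f) τ = deriv F (f τ) / 2 := by
  have hsq : HasDerivAt (fun t => deriv f t ^ 2) (2 * deriv f τ * deriv (deriv f) τ) τ := by
    simpa using hf'.hasDerivAt.fun_pow 2
  have hcomp : HasDerivAt (fun t => deriv f t ^ 2) (deriv F (f τ) * deriv f τ) τ :=
    (hF.hasDerivAt.comp τ hf.hasDerivAt).congr_of_eventuallyEq heq
  have h := hsq.unique hcomp
  field_simp
  exact mul_right_cancel₀ hne (by linarith)

theorem ContDiffOn.differentiableAt_deriv {f : ℝ → ℝ} {s : Set ℝ} {x : ℝ}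
    (hf : ContDiffOn ℝ 2 f s) (hs : IsOpen s) (hx : x ∈ s) :
    DifferentiableAt ℝ (deriv f) x :=
  ((hf.deriv_of_isOpen (m := 1) hs (by norm_num)).contDiffAt (hs.mem_nhds hx)).differentiableAt
    one_ne_zero

noncomputable def friedmannRHS (n : ℕ) (m Λ κt κ σ ω₀ ρ₀ : ℝ) (μt : ℝ → ℝ) (y : ℝ) : ℝ :=
  m * exp (-((n : ℝ) - 1) * y) + (2 * Λ / ((n : ℝ) * ((n : ℝ) + 1))) * exp (2 * y) - κt
    + (κ ^ 2 / (n : ℝ) ^ 2) * (σ + ρ₀ * exp (-((n : ℝ) + ω₀) * y - μt y)) ^ 2 * exp (2 * y)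

section friedmannRHS

variable {n : ℕ} {m Λ κt κ σ ω₀ ρ₀ : ℝ} {μt : ℝ → ℝ} {l y : ℝ}

theorem hasDerivAt_friedmannRHS (hμt : HasDerivAt μt l y) :
    HasDerivAt (friedmannRHS n m Λ κt κ σ ω₀ ρ₀ μt)
      (-((n : ℝ) - 1) * m * exp (-((n : ℝ) - 1) * y)
        + 2 * (2 * Λ / ((n : ℝ) * ((n : ℝ) + 1))) * exp (2 * y)
        + 2 * (κ ^ 2 / (n : ℝ) ^ 2) * (σ + ρ₀ * exp (-((n : ℝ) + ω₀) * y - μt y))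
          * (ρ₀ * exp (-((n : ℝ) + ω₀) * y - μt y) * (-((n : ℝ) + ω₀) - l)
            + σ + ρ₀ * exp (-((n : ℝ) + ω₀) * y - μt y)) * exp (2 * y)) y := by
  have hlin (c : ℝ) : HasDerivAt (fun y => c * y) c y := by
    simpa using (hasDerivAt_id y).const_mul c
  have hE := ((hlin (-((n : ℝ) + ω₀))).fun_sub hμt).exp
  have hP := ((hE.const_mul ρ₀).const_add σ).fun_pow 2
  refine ((((((hlin _).exp.const_mul m).fun_add ((hlin 2).exp.const_mul _)).sub_const κt).fun_add
    ((hP.const_mul (κ ^ 2 / (n : ℝ) ^ 2)).fun_mul (hlin 2).exp))).congr_deriv ?_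
  ring

theorem deriv_friedmannRHS_div_two_add (hn : n ≠ 0) (hμt : HasDerivAt μt l y)
    (hω₀ : ω₀ = -((n : ℝ) - 1) / 2) (hσ : n = 3 ∨ σ = 0) :
    deriv (friedmannRHS n m Λ κt κ σ ω₀ ρ₀ μt) y / 2
        + ((n : ℝ) - 1) / 2 * friedmannRHS n m Λ κt κ σ ω₀ ρ₀ μt y
      = Λ / (n : ℝ) * exp (2 * y) - (((n : ℝ) - 1) / 2) * κt
          + κ ^ 2 / (n : ℝ) ^ 2
            * (-l * ρ₀ ^ 2 * exp (-((n : ℝ) - 1) * y - 2 * μt y)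
               + (2 - l) * σ * ρ₀ * exp (-μt y)
               + (((n : ℝ) - 1) / 2 + 1) * σ ^ 2 * exp (2 * y)) := by
  rw [(hasDerivAt_friedmannRHS hμt).deriv, friedmannRHS]
  subst hω₀
  have hE2 : exp (-((n : ℝ) + -((n : ℝ) - 1) / 2) * y - μt y) ^ 2 * exp (2 * y)
      = exp (-((n : ℝ) - 1) * y - 2 * μt y) := by
    rw [sq, ← exp_add, ← exp_add]
    ring_nf
  have hσE : (2 - l) * σ * ρ₀ * exp (-μt y) = ρ₀ * σ
      * (exp (-((n : ℝ) + -((n : ℝ) - 1) / 2) * y - μt y) * exp (2 * y))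
      * (((n : ℝ) + 1) / 2 - l) := by
    rcases hσ with rfl | rfl
    · rw [← exp_add]
      push_cast
      ring_nf
    · simp
  rw [← hE2, hσE]
  generalize exp (-((n : ℝ) + -((n : ℝ) - 1) / 2) * y - μt y) = E
  have hn' : (n : ℝ) ≠ 0 := by exact_mod_cast hn
  field_simp
  ring

end friedmannRHS

theorem differentiated_friedmann
    (n : ℕ) (hn : 3 ≤ n)
    (m Λ κt κ σ ω₀ ρ₀ : ℝ)
    (lam μt : ℝ → ℝ)
    (hμt : ∀ t : ℝ, HasDerivAt μt (lam t) t)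
    (a : ℝ) (f : ℝ → ℝ)
    (hf : ContDiffOn ℝ (⊤ : ℕ∞) f (Set.Ioo (-a) 0))
    (hf' : ∀ τ ∈ Set.Ioo (-a) (0:ℝ), deriv f τ < 0)
    (hFried : ∀ τ ∈ Set.Ioo (-a) (0:ℝ),
      (deriv f τ) ^ 2
        = m * Real.exp (-((n : ℝ) - 1) * f τ)
          + (2 * Λ / ((n : ℝ) * ((n : ℝ) + 1))) * Real.exp (2 * f τ) - κt
          + (κ ^ 2 / (n : ℝ) ^ 2)
            * (σ + ρ₀ * Real.exp (-((n : ℝ) + ω₀) * f τ - μt (f τ))) ^ 2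
            * Real.exp (2 * f τ))
    (hω₀ : ω₀ = -((n : ℝ) - 1) / 2)
    (hσ : 3 < n → σ = 0) :
    ∀ τ ∈ Set.Ioo (-a) (0:ℝ),
      deriv (deriv f) τ + (((n : ℝ) - 1) / 2) * (deriv f τ) ^ 2
        = Λ / (n : ℝ) * Real.exp (2 * f τ) - (((n : ℝ) - 1) / 2) * κt
          + κ ^ 2 / (n : ℝ) ^ 2
            * (-(lam (f τ)) * ρ₀ ^ 2
                  * Real.exp (-((n : ℝ) - 1) * f τ - 2 * μt (f τ))
               + (2 - lam (f τ)) * σ * ρ₀ * Real.exp (-μt (f τ))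
               + (((n : ℝ) - 1) / 2 + 1) * σ ^ 2 * Real.exp (2 * f τ)) := by
  intro τ hτ
  have hFried' : ∀ t ∈ Set.Ioo (-a) (0:ℝ),
      deriv f t ^ 2 = friedmannRHS n m Λ κt κ σ ω₀ ρ₀ μt (f t) := hFried
  have hdf : DifferentiableAt ℝ f τ :=
    (hf.differentiableOn (by simp)).differentiableAt (isOpen_Ioo.mem_nhds hτ)
  rw [deriv_deriv_eq_half_deriv_of_sq_deriv_eventuallyEq_comp hdf
      ((hf.of_le (by norm_cast)).differentiableAt_deriv isOpen_Ioo hτ)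
      (hasDerivAt_friedmannRHS (hμt (f τ))).differentiableAt (hf' τ hτ).ne
      (eventually_of_mem (isOpen_Ioo.mem_nhds hτ) hFried'), hFried' τ hτ]
  exact deriv_friedmannRHS_div_two_add (by omega) (hμt (f τ)) hω₀ (hn.eq_or_lt.imp Eq.symm hσ)
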